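/- There exist constants δ > 0 and C > 0 such that for every E > 0 and every x ∈ ℝ² with 0 < 2π√E‖x‖ ≤ δ, setting t = 2π√E‖x‖, one has J₀(t)² < 1 and the conditional-variance determinant quantity Ψ_E(x) := | 2π²E ( 2π²E − 4π²E J₁(t)² / (1 − J₀(t)²) ) | / (1 − J₀(t)²) satisfies | Ψ_E(x) − (1/8)(2π²E)² | ≤ C E³ ‖x‖². In particular Ψ_E(x) = (1/8)(2π²E)² + E³ O(‖x‖²) as x → 0, with the implied constant independent of E. -/

import Mathlib

/-!
With `t = 2π√E‖x‖`, `D = 1 - J₀(t)²` and `S = 2J₁(t)²`, the quantity is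
`Ψ_E(x) = (2π²E)² (D - S) / D²`. The power series give `D = t²/2 - 3t⁴/32 + O(t⁶)` and
`S = t²/2 - t⁴/8 + O(t⁶)` with explicit constants for `t ≤ 1`, the tails being dominated by a
geometric series. The `t²` terms cancel in `D - S = t⁴/32 + O(t⁶)` while `D² = t⁴/4 + O(t⁶)`,
so `(D - S)/D² = 1/8 + O(t²)`, and `t² = 4π²E‖x‖²` supplies the factor `E³‖x‖²`.
-/

open Real MeasureTheory

/-- Bessel function of the first kind of order `n`, defined by its power series. -/
noncomputable def besselJ (n : ℕ) (t : ℝ) : ℝ :=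
  ∑' m : ℕ, ((-1 : ℝ) ^ m / (Nat.factorial m * Nat.factorial (m + n))) * (t / 2) ^ (2 * m + n)

/-- The conditional-variance determinant quantity
`Ψ_E(x) = |det Ω_E(x)| / (1 − r^E(x)²)`, expressed via Bessel functions with
`t = 2π√E‖x‖`: here `det Ω_E(x) = 2π²E (2π²E − 4π²E J₁(t)²/(1 − J₀(t)²))` and
`r^E(x) = J₀(t)`. -/
noncomputable def PsiE (E : ℝ) (x : EuclideanSpace ℝ (Fin 2)) : ℝ :=
  |2 * Real.pi ^ 2 * E *
      (2 * Real.pi ^ 2 * E -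
        4 * Real.pi ^ 2 * E * (besselJ 1 (2 * Real.pi * Real.sqrt E * ‖x‖)) ^ 2 /
          (1 - (besselJ 0 (2 * Real.pi * Real.sqrt E * ‖x‖)) ^ 2))| /
    (1 - (besselJ 0 (2 * Real.pi * Real.sqrt E * ‖x‖)) ^ 2)

noncomputable def besselJTerm (n : ℕ) (t : ℝ) (m : ℕ) : ℝ :=
  ((-1 : ℝ) ^ m / (Nat.factorial m * Nat.factorial (m + n))) * (t / 2) ^ (2 * m + n)

theorem besselJ_eq_tsum_besselJTerm (n : ℕ) (t : ℝ) : besselJ n t = ∑' m, besselJTerm n t m :=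
  rfl

theorem abs_besselJTerm_add_le {t : ℝ} (ht : |t| ≤ 1) (n k m : ℕ) :
    |besselJTerm n t (m + k)| ≤ |t / 2| ^ (2 * k + n) * (1 / 4) ^ m := by
  have hfact : (1 : ℝ) ≤ (m + k).factorial * (m + k + n).factorial := by
    exact_mod_cast Nat.one_le_iff_ne_zero.2 (by positivity)
  have hsq : |t / 2| ^ 2 ≤ 1 / 4 := by
    rw [sq_abs, div_pow]; nlinarith [abs_le.1 ht]
  calc |besselJTerm n t (m + k)|
      = |t / 2| ^ (2 * (m + k) + n) / ((m + k).factorial * (m + k + n).factorial) := by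
        simp only [besselJTerm, abs_mul, abs_div, abs_pow, abs_neg, abs_one, one_pow, Nat.abs_cast]
        ring
    _ ≤ |t / 2| ^ (2 * (m + k) + n) := div_le_self (by positivity) hfact
    _ = |t / 2| ^ (2 * k + n) * (|t / 2| ^ 2) ^ m := by ring
    _ ≤ |t / 2| ^ (2 * k + n) * (1 / 4) ^ m := by gcongr

theorem summable_besselJTerm {t : ℝ} (ht : |t| ≤ 1) (n : ℕ) : Summable (besselJTerm n t) :=
  Summable.of_norm_bounded ((summable_geometric_of_lt_one (by norm_num) (by norm_num)).mul_left _)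
    fun m => abs_besselJTerm_add_le ht n 0 m

-- For `|t| ≤ 1` successive terms shrink at least by the factor `(t/2)² ≤ 1/4`, and `4/3 = ∑ (1/4)^m`.
theorem abs_besselJ_sub_sum_range_le {t : ℝ} (ht : |t| ≤ 1) (n k : ℕ) :
    |besselJ n t - ∑ m ∈ Finset.range k, besselJTerm n t m| ≤ 4 / 3 * |t / 2| ^ (2 * k + n) := by
  rw [besselJ_eq_tsum_besselJTerm, ← (summable_besselJTerm ht n).sum_add_tsum_nat_add k,
    add_sub_cancel_left]
  have hgeo := (hasSum_geometric_of_lt_one (r := 1 / 4) (by norm_num) (by norm_num)).mul_left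
    (|t / 2| ^ (2 * k + n))
  refine (tsum_of_norm_bounded (f := fun m => besselJTerm n t (m + k)) hgeo
    fun m => abs_besselJTerm_add_le ht n k m).trans (le_of_eq ?_)
  norm_num
  ring

theorem abs_besselJ_zero_sub_le {t : ℝ} (h0 : 0 ≤ t) (h1 : t ≤ 1) :
    |besselJ 0 t - (1 - t ^ 2 / 4 + t ^ 4 / 64)| ≤ t ^ 6 / 48 := by
  have h := abs_besselJ_sub_sum_range_le (abs_le.2 ⟨by linarith, h1⟩) 0 3
  simp only [Finset.sum_range_succ, Finset.sum_range_zero, besselJTerm,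
    abs_of_nonneg (by positivity : 0 ≤ t / 2)] at h
  norm_num [Nat.factorial] at h
  convert h using 2 <;> ring

theorem abs_besselJ_one_sub_le {t : ℝ} (h0 : 0 ≤ t) (h1 : t ≤ 1) :
    |besselJ 1 t - (t / 2 - t ^ 3 / 16)| ≤ t ^ 5 / 24 := by
  have h := abs_besselJ_sub_sum_range_le (abs_le.2 ⟨by linarith, h1⟩) 1 2
  simp only [Finset.sum_range_succ, Finset.sum_range_zero, besselJTerm,
    abs_of_nonneg (by positivity : 0 ≤ t / 2)] at h
  norm_num [Nat.factorial] at h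
  convert h using 2 <;> ring

theorem abs_one_sub_besselJ_zero_sq_sub_le {t : ℝ} (h0 : 0 ≤ t) (h1 : t ≤ 1) :
    |1 - besselJ 0 t ^ 2 - (t ^ 2 / 2 - 3 * t ^ 4 / 32)| ≤ t ^ 6 / 8 := by
  have hJ := abs_besselJ_zero_sub_le h0 h1
  generalize besselJ 0 t = J at hJ ⊢
  obtain ⟨e, rfl⟩ : ∃ e, J = 1 - t ^ 2 / 4 + t ^ 4 / 64 + e := ⟨J - (1 - t ^ 2 / 4 + t ^ 4 / 64), by ring⟩
  rw [add_sub_cancel_left] at hJ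
  obtain ⟨he₁, he₂⟩ := abs_le.1 hJ
  have ht8 : t ^ 8 ≤ t ^ 6 := pow_le_pow_of_le_one h0 h1 (by norm_num)
  have ht6 : t ^ 6 ≤ 1 := pow_le_one₀ h0 h1
  have hP₁ : 0 ≤ 1 - t ^ 2 / 4 + t ^ 4 / 64 := by nlinarith [pow_nonneg h0 4]
  have hP₂ : 1 - t ^ 2 / 4 + t ^ 4 / 64 ≤ 1 := by nlinarith [pow_nonneg h0 4]
  rw [abs_le]
  constructor <;> nlinarith [mul_le_mul_of_nonneg_left he₂ hP₁, mul_le_mul_of_nonneg_left he₁ hP₁,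
    pow_nonneg h0 6, pow_nonneg h0 8]

theorem abs_two_mul_besselJ_one_sq_sub_le {t : ℝ} (h0 : 0 ≤ t) (h1 : t ≤ 1) :
    |2 * besselJ 1 t ^ 2 - (t ^ 2 / 2 - t ^ 4 / 8)| ≤ t ^ 6 / 8 := by
  have hJ := abs_besselJ_one_sub_le h0 h1
  generalize besselJ 1 t = J at hJ ⊢
  obtain ⟨e, rfl⟩ : ∃ e, J = t / 2 - t ^ 3 / 16 + e := ⟨J - (t / 2 - t ^ 3 / 16), by ring⟩
  rw [add_sub_cancel_left] at hJ
  obtain ⟨he₁, he₂⟩ := abs_le.1 hJ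
  have ht2 : t ^ 2 ≤ 1 := pow_le_one₀ h0 h1
  have ht10 : t ^ 10 ≤ t ^ 6 := pow_le_pow_of_le_one h0 h1 (by norm_num)
  have hP₁ : 0 ≤ t / 2 - t ^ 3 / 16 := by nlinarith [pow_nonneg h0 3]
  have hP₂ : t / 2 - t ^ 3 / 16 ≤ t / 2 := by nlinarith [pow_nonneg h0 3]
  have he2 : e ^ 2 ≤ t ^ 10 / 576 := by
    have := sq_le_sq' he₁ he₂
    linarith [show (t ^ 5 / 24) ^ 2 = t ^ 10 / 576 by ring]
  have hPe : |(t / 2 - t ^ 3 / 16) * e| ≤ t ^ 6 / 48 := by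
    rw [abs_mul, abs_of_nonneg hP₁]
    calc (t / 2 - t ^ 3 / 16) * |e| ≤ t / 2 * (t ^ 5 / 24) :=
          mul_le_mul hP₂ hJ (abs_nonneg e) (by positivity)
      _ = t ^ 6 / 48 := by ring
  have hid : 2 * (t / 2 - t ^ 3 / 16 + e) ^ 2 - (t ^ 2 / 2 - t ^ 4 / 8)
      = t ^ 6 / 128 + 4 * ((t / 2 - t ^ 3 / 16) * e) + 2 * e ^ 2 := by ring
  rw [hid, abs_le]
  obtain ⟨hPe₁, hPe₂⟩ := abs_le.1 hPe
  constructor <;> nlinarith [pow_nonneg h0 6, sq_nonneg e]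

theorem abs_sub_div_sq_sub_one_eighth_le {t D S : ℝ} (h0 : 0 < t) (h1 : t ≤ 1 / 4)
    (hD : |D - (t ^ 2 / 2 - 3 * t ^ 4 / 32)| ≤ t ^ 6 / 8)
    (hS : |S - (t ^ 2 / 2 - t ^ 4 / 8)| ≤ t ^ 6 / 8) :
    0 < D - S ∧ |(D - S) / D ^ 2 - 1 / 8| ≤ 6 * t ^ 2 := by
  obtain ⟨hD₁, hD₂⟩ := abs_le.1 hD
  obtain ⟨hS₁, hS₂⟩ := abs_le.1 hS
  have ht2 : t ^ 2 ≤ 1 / 16 := by nlinarith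
  have ht4 : t ^ 4 ≤ t ^ 2 / 16 := by nlinarith [pow_pos h0 2]
  have ht6 : t ^ 6 ≤ t ^ 4 / 16 := by nlinarith [pow_pos h0 4]
  have ht4_pos : 0 < t ^ 4 := pow_pos h0 4
  have hDlow : t ^ 2 / 4 ≤ D := by linarith
  have hD_pos : 0 < D := lt_of_lt_of_le (by positivity) hDlow
  have hDsq : t ^ 4 / 16 ≤ D ^ 2 := by
    nlinarith [mul_le_mul hDlow hDlow (by positivity) (by positivity)]
  have hDsq_sub : |D ^ 2 - t ^ 4 / 4| ≤ t ^ 6 / 4 := by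
    have hhalf : |D - t ^ 2 / 2| ≤ t ^ 4 / 8 := abs_le.2 ⟨by linarith, by linarith⟩
    calc |D ^ 2 - t ^ 4 / 4| = |D - t ^ 2 / 2| * (D + t ^ 2 / 2) := by
          rw [← abs_of_pos (by positivity : 0 < D + t ^ 2 / 2), ← abs_mul]; ring_nf
      _ ≤ t ^ 4 / 8 * (2 * t ^ 2) := mul_le_mul hhalf (by linarith) (by linarith) (by positivity)
      _ = t ^ 6 / 4 := by ring
  have hnum : |8 * (D - S) - D ^ 2| ≤ 3 * t ^ 6 := by
    obtain ⟨h₁, h₂⟩ := abs_le.1 hDsq_sub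
    exact abs_le.2 ⟨by linarith, by linarith⟩
  refine ⟨by linarith, ?_⟩
  have hDsq_pos : 0 < 8 * D ^ 2 := by positivity
  rw [show (D - S) / D ^ 2 - 1 / 8 = (8 * (D - S) - D ^ 2) / (8 * D ^ 2) by field_simp,
    abs_div, abs_of_pos hDsq_pos, div_le_iff₀ hDsq_pos]
  nlinarith [mul_le_mul_of_nonneg_left hDsq (by positivity : (0 : ℝ) ≤ 48 * t ^ 2)]

theorem PsiE_eq {E : ℝ} (x : EuclideanSpace ℝ (Fin 2)) (hE : 0 < E)
    (hN : 0 < 1 - besselJ 0 (2 * π * √E * ‖x‖) ^ 2 - 2 * besselJ 1 (2 * π * √E * ‖x‖) ^ 2) :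
    PsiE E x = (2 * π ^ 2 * E) ^ 2 *
      ((1 - besselJ 0 (2 * π * √E * ‖x‖) ^ 2 - 2 * besselJ 1 (2 * π * √E * ‖x‖) ^ 2) /
        (1 - besselJ 0 (2 * π * √E * ‖x‖) ^ 2) ^ 2) := by
  rw [PsiE]
  set J₀ := besselJ 0 (2 * π * √E * ‖x‖)
  set J₁ := besselJ 1 (2 * π * √E * ‖x‖)
  have hD : 0 < 1 - J₀ ^ 2 := by nlinarith [sq_nonneg J₁]
  have hdet : 2 * π ^ 2 * E * (2 * π ^ 2 * E - 4 * π ^ 2 * E * J₁ ^ 2 / (1 - J₀ ^ 2))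
      = (2 * π ^ 2 * E) ^ 2 * ((1 - J₀ ^ 2 - 2 * J₁ ^ 2) / (1 - J₀ ^ 2)) := by
    field_simp; ring
  rw [hdet, abs_of_pos (by positivity)]
  field_simp

/-- There are `δ, C > 0` such that for every `E > 0` and every `x ∈ ℝ²` with
`0 < 2π√E‖x‖ ≤ δ` one has `J₀(2π√E‖x‖)² < 1` and
`|Ψ_E(x) − (1/8)(2π²E)²| ≤ C E³ ‖x‖²`; that is,
`Ψ_E(x) = (1/8)(2π²E)² + E³ O(‖x‖²)` as `x → 0`, uniformly in `E`. -/
theorem PsiE_taylor_expansion :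
    ∃ δ : ℝ, 0 < δ ∧ ∃ C : ℝ, 0 < C ∧
      ∀ E : ℝ, 0 < E → ∀ x : EuclideanSpace ℝ (Fin 2),
        0 < 2 * Real.pi * Real.sqrt E * ‖x‖ →
        2 * Real.pi * Real.sqrt E * ‖x‖ ≤ δ →
        (besselJ 0 (2 * Real.pi * Real.sqrt E * ‖x‖)) ^ 2 < 1 ∧
        |PsiE E x - (1 / 8) * (2 * Real.pi ^ 2 * E) ^ 2| ≤ C * E ^ 3 * ‖x‖ ^ 2 := by
  refine ⟨1 / 4, by norm_num, 96 * π ^ 6, by positivity, fun E hE x ht htδ => ?_⟩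
  set t := 2 * π * √E * ‖x‖ with ht_def
  have ht1 : t ≤ 1 := htδ.trans (by norm_num)
  obtain ⟨hN, hratio⟩ := abs_sub_div_sq_sub_one_eighth_le ht htδ
    (abs_one_sub_besselJ_zero_sq_sub_le ht.le ht1) (abs_two_mul_besselJ_one_sq_sub_le ht.le ht1)
  refine ⟨by nlinarith [sq_nonneg (besselJ 1 t)], ?_⟩
  have ht_sq : t ^ 2 = 4 * π ^ 2 * E * ‖x‖ ^ 2 := by
    rw [ht_def, mul_pow, mul_pow, mul_pow, sq_sqrt hE.le]; ring
  have hPsi := PsiE_eq x hE hN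
  rw [← ht_def] at hPsi
  rw [hPsi, mul_comm (1 / 8 : ℝ), ← mul_sub, abs_mul, abs_of_pos (by positivity)]
  calc (2 * π ^ 2 * E) ^ 2 * |_| ≤ (2 * π ^ 2 * E) ^ 2 * (6 * t ^ 2) := by gcongr
    _ = 96 * π ^ 6 * E ^ 3 * ‖x‖ ^ 2 := by rw [ht_sq]; ring
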